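/- The proof system LocKD45 is sound and complete with respect to the class H^{SUT}_n of all simple, n-uniform and tail-complete hypergraph models: for every formula φ of the doxastic fragment L_B, LocKD45 ⊢ φ if and only if M,e ⊨_h φ for every model M ∈ H^{SUT}_n and every hyperedge e of M. -/
import Mathlib


namespace DoxHG

/-- Formulas of the epistemic-doxastic language `L_KB`. -/
inductive Form (Ag Atom : Type) : Type
  | atom : Atom → Form Ag Atom
  | neg  : Form Ag Atom → Form Ag Atom
  | and  : Form Ag Atom → Form Ag Atom → Form Ag Atom
  | B    : Ag → Form Ag Atom → Form Ag Atom
  | K    : Ag → Form Ag Atom → Form Ag Atom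

namespace Form

variable {Ag Atom : Type}

/-- φ ∨ ψ := ¬(¬φ ∧ ¬ψ) -/
def or (φ ψ : Form Ag Atom) : Form Ag Atom := .neg (.and (.neg φ) (.neg ψ))

/-- φ → ψ := ¬φ ∨ ψ -/
def imp (φ ψ : Form Ag Atom) : Form Ag Atom := Form.or (.neg φ) ψ

/-- φ ↔ ψ -/
def biimp (φ ψ : Form Ag Atom) : Form Ag Atom := .and (φ.imp ψ) (ψ.imp φ)

/-- ⊥ := p ∧ ¬p for an arbitrary but fixed propositional variable p. -/
def bot [Inhabited Atom] : Form Ag Atom := .and (.atom default) (.neg (.atom default))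

/-- Membership in the doxastic fragment `L_B` (no knowledge operators). -/
def noK : Form Ag Atom → Prop
  | .atom _  => True
  | .neg φ   => φ.noK
  | .and φ ψ => φ.noK ∧ ψ.noK
  | .B _ φ   => φ.noK
  | .K _ _   => False

/-- φ is an `a`-formula: all variables are local variables of `a` (as given by
`owner`) and all modal operators are `B a` or `K a`. -/
def isAFormula (owner : Atom → Ag) (a : Ag) : Form Ag Atom → Prop
  | .atom p  => owner p = a
  | .neg φ   => φ.isAFormula owner a
  | .and φ ψ => φ.isAFormula owner a ∧ ψ.isAFormula owner a
  | .B b φ   => b = a ∧ φ.isAFormula owner a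
  | .K b φ   => b = a ∧ φ.isAFormula owner a

end Form

/-- φ is (an instance of) a classical propositional tautology: it evaluates to
true under every boolean valuation that respects negation and conjunction
(treating atoms and modal formulas as opaque). -/
def Tautology {Ag Atom : Type} (φ : Form Ag Atom) : Prop :=
  ∀ v : Form Ag Atom → Bool,
    (∀ ψ, v (.neg ψ) = !v ψ) →
    (∀ ψ χ, v (.and ψ χ) = (v ψ && v χ)) →
    v φ = true

/-! ### Doxastic Kripke models -/

/-- A doxastic Kripke model (with set of worlds the type `W`, assumed nonempty
where required): doxastic accessibility relations `B a` and valuation `V`. -/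
structure KModel (Ag Atom W : Type) where
  B : Ag → W → W → Prop
  V : W → Set Atom

section Kripke

variable {Ag Atom W : Type}

/-- Kripke satisfaction `⊨ₖ`; `K a` is interpreted via the equivalence relation
generated by `B a` (i.e. `Relation.EqvGen`, the smallest equivalence relation
containing it). -/
def ksat (M : KModel Ag Atom W) : W → Form Ag Atom → Prop
  | w, .atom p  => p ∈ M.V w
  | w, .neg φ   => ¬ ksat M w φ
  | w, .and φ ψ => ksat M w φ ∧ ksat M w ψ
  | w, .B a φ   => ∀ u, M.B a w u → ksat M u φ
  | w, .K a φ   => ∀ u, Relation.EqvGen (M.B a) w u → ksat M u φ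

def KModel.Serial (M : KModel Ag Atom W) : Prop := ∀ (a : Ag) (w : W), ∃ u, M.B a w u

def KModel.Transit (M : KModel Ag Atom W) : Prop :=
  ∀ (a : Ag) (u v w : W), M.B a u v → M.B a v w → M.B a u w

def KModel.Eucl (M : KModel Ag Atom W) : Prop :=
  ∀ (a : Ag) (u v w : W), M.B a u v → M.B a u w → M.B a v w

/-- Locality: worlds related by `B a ∪ (B a)⁻¹` agree on the local variables of `a`. -/
def KModel.Local (owner : Atom → Ag) (M : KModel Ag Atom W) : Prop :=
  ∀ (a : Ag) (u v : W), (M.B a u v ∨ M.B a v u) →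
    M.V u ∩ {p | owner p = a} = M.V v ∩ {p | owner p = a}

/-- Properness: distinct worlds are distinguished by some agent. -/
def KModel.Proper (M : KModel Ag Atom W) : Prop :=
  ∀ u v : W, u ≠ v → ∃ a : Ag, ¬ Relation.EqvGen (M.B a) u v

end Kripke

/-! ### The Hilbert systems EDL, LocK45 and LocKD45 -/

section ProofSystems

variable {Ag Atom : Type}

/-- Provability in the Hilbert system EDL. -/
inductive EDLProv (owner : Atom → Ag) : Form Ag Atom → Prop
  | taut {φ : Form Ag Atom} : Tautology φ → EDLProv owner φ
  | axKB (a : Ag) (φ ψ : Form Ag Atom) :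
      EDLProv owner ((Form.B a (φ.imp ψ)).imp ((Form.B a φ).imp (Form.B a ψ)))
  | axDB (a : Ag) (φ : Form Ag Atom) :
      EDLProv owner (Form.neg (Form.B a (Form.and φ (Form.neg φ))))
  | ax4B (a : Ag) (φ : Form Ag Atom) :
      EDLProv owner ((Form.B a φ).imp (Form.B a (Form.B a φ)))
  | ax5B (a : Ag) (φ : Form Ag Atom) :
      EDLProv owner ((Form.neg (Form.B a φ)).imp (Form.B a (Form.neg (Form.B a φ))))
  | axKK (a : Ag) (φ ψ : Form Ag Atom) :
      EDLProv owner ((Form.K a (φ.imp ψ)).imp ((Form.K a φ).imp (Form.K a ψ)))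
  | axTK (a : Ag) (φ : Form Ag Atom) :
      EDLProv owner ((Form.K a φ).imp φ)
  | ax4K (a : Ag) (φ : Form Ag Atom) :
      EDLProv owner ((Form.K a φ).imp (Form.K a (Form.K a φ)))
  | ax5K (a : Ag) (φ : Form Ag Atom) :
      EDLProv owner ((Form.neg (Form.K a φ)).imp (Form.K a (Form.neg (Form.K a φ))))
  | axPI (a : Ag) (φ : Form Ag Atom) :
      EDLProv owner ((Form.B a φ).imp (Form.K a (Form.B a φ)))
  | axNI (a : Ag) (φ : Form Ag Atom) :
      EDLProv owner ((Form.neg (Form.B a φ)).imp (Form.K a (Form.neg (Form.B a φ))))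
  | axKIB (a : Ag) (φ : Form Ag Atom) :
      EDLProv owner ((Form.K a φ).imp (Form.B a φ))
  | axLoc (a : Ag) (p : Atom) (h : owner p = a) :
      EDLProv owner (Form.and ((Form.atom p).imp (Form.B a (Form.atom p)))
        ((Form.neg (Form.atom p)).imp (Form.B a (Form.neg (Form.atom p)))))
  | mp {φ ψ : Form Ag Atom} :
      EDLProv owner (φ.imp ψ) → EDLProv owner φ → EDLProv owner ψ
  | nec (a : Ag) {φ : Form Ag Atom} : EDLProv owner φ → EDLProv owner (Form.K a φ)

/-- Provability in the Hilbert systems over the doxastic fragment `L_B`: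
`BProv owner true` is LocKD45 (with axiom D_B) and `BProv owner false` is
LocK45 (without D_B). -/
inductive BProv (owner : Atom → Ag) (withD : Bool) : Form Ag Atom → Prop
  | taut {φ : Form Ag Atom} : φ.noK → Tautology φ → BProv owner withD φ
  | axKB (a : Ag) {φ ψ : Form Ag Atom} (hφ : φ.noK) (hψ : ψ.noK) :
      BProv owner withD ((Form.B a (φ.imp ψ)).imp ((Form.B a φ).imp (Form.B a ψ)))
  | axDB (a : Ag) {φ : Form Ag Atom} (hD : withD = true) (hφ : φ.noK) :
      BProv owner withD (Form.neg (Form.B a (Form.and φ (Form.neg φ))))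
  | ax4B (a : Ag) {φ : Form Ag Atom} (hφ : φ.noK) :
      BProv owner withD ((Form.B a φ).imp (Form.B a (Form.B a φ)))
  | ax5B (a : Ag) {φ : Form Ag Atom} (hφ : φ.noK) :
      BProv owner withD ((Form.neg (Form.B a φ)).imp (Form.B a (Form.neg (Form.B a φ))))
  | axLoc (a : Ag) (p : Atom) (h : owner p = a) :
      BProv owner withD (Form.and ((Form.atom p).imp (Form.B a (Form.atom p)))
        ((Form.neg (Form.atom p)).imp (Form.B a (Form.neg (Form.atom p)))))
  | mp {φ ψ : Form Ag Atom} :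
      BProv owner withD (φ.imp ψ) → BProv owner withD φ → BProv owner withD ψ
  | nec (a : Ag) {φ : Form Ag Atom} : BProv owner withD φ → BProv owner withD (Form.B a φ)

/-- Conjunction of a finite list of formulas (the empty conjunction is ¬⊥). -/
def conj [Inhabited Atom] : List (Form Ag Atom) → Form Ag Atom
  | []        => Form.neg Form.bot
  | [φ]       => φ
  | φ :: rest => Form.and φ (conj rest)

/-- Γ ⊢ φ in EDL: some finite subset Δ ⊆ Γ has EDL ⊢ (⋀Δ) → φ. -/
def ProvFrom [Inhabited Atom] (owner : Atom → Ag) (Γ : Set (Form Ag Atom))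
    (φ : Form Ag Atom) : Prop :=
  ∃ L : List (Form Ag Atom), (∀ ψ ∈ L, ψ ∈ Γ) ∧ EDLProv owner ((conj L).imp φ)

/-- Γ is EDL-consistent. -/
def EDLConsistent [Inhabited Atom] (owner : Atom → Ag) (Γ : Set (Form Ag Atom)) : Prop :=
  ¬ ProvFrom owner Γ Form.bot

/-- Γ is maximally EDL-consistent. -/
def MaxEDLConsistent [Inhabited Atom] (owner : Atom → Ag) (Γ : Set (Form Ag Atom)) : Prop :=
  EDLConsistent owner Γ ∧ ∀ Δ : Set (Form Ag Atom), Γ ⊂ Δ → ¬ EDLConsistent owner Δ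

end ProofSystems

/-! ### Directed hypergraph models -/

/-- The undirected hyperedge `ē = T(e) ∪ H(e)` induced by a directed hyperedge
`e = (T(e), H(e))`. -/
def ebar {V : Type} (e : Set V × Set V) : Set V := e.1 ∪ e.2

/-- A (directed) hypergraph model: a vertex set, a set of directed hyperedges
(pairs (tail, head)), a coloring and a valuation.  Well-formedness conditions
are stated separately. -/
structure HModel (Ag Atom V : Type) where
  Vset : Set V
  E : Set (Set V × Set V)
  χ : V → Ag
  ℓ : V → Set Atom

namespace HModel

variable {Ag Atom V : Type}

/-- `(Vset, E)` is a directed hypergraph: the vertex set is nonempty and every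
hyperedge consists of a finite tail and a finite head, disjoint from each
other, both made of vertices. -/
def IsHypergraph (M : HModel Ag Atom V) : Prop :=
  M.Vset.Nonempty ∧
    ∀ e ∈ M.E, e.1 ⊆ M.Vset ∧ e.2 ⊆ M.Vset ∧ e.1.Finite ∧ e.2.Finite ∧ Disjoint e.1 e.2

/-- χ is a coloring: distinct vertices of the same hyperedge get distinct colors. -/
def IsChromatic (M : HModel Ag Atom V) : Prop :=
  ∀ e ∈ M.E, Set.InjOn M.χ (ebar e)

/-- The valuation assigns to an `a`-colored vertex only local variables of `a`. -/
def ValOk (owner : Atom → Ag) (M : HModel Ag Atom V) : Prop :=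
  ∀ v ∈ M.Vset, M.ℓ v ⊆ {p | owner p = M.χ v}

/-- M is a (well-formed, chromatic) hypergraph model. -/
def IsModel (owner : Atom → Ag) (M : HModel Ag Atom V) : Prop :=
  M.IsHypergraph ∧ M.IsChromatic ∧ M.ValOk owner

/-- Simplicity: for distinct hyperedges, `ē₁ ⊄ ē₂`. -/
def Simple (M : HModel Ag Atom V) : Prop :=
  ∀ e₁ ∈ M.E, ∀ e₂ ∈ M.E, e₁ ≠ e₂ → ¬ ebar e₁ ⊆ ebar e₂

/-- n-uniformity: every hyperedge has exactly `n` vertices. -/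
def Uniform (M : HModel Ag Atom V) (n : ℕ) : Prop :=
  ∀ e ∈ M.E, (ebar e).ncard = n

/-- Tail-completeness: every vertex lies in the tail of some hyperedge. -/
def TailComplete (M : HModel Ag Atom V) : Prop :=
  ∀ v ∈ M.Vset, ∃ e ∈ M.E, v ∈ e.1

end HModel

section HSemantics

variable {Ag Atom V : Type}

/-- The doxastic accessibility relation `B^G_a` between hyperedges:
some `a`-colored vertex lies in `ē₁ ∩ T(e₂)`. -/
def Bacc (M : HModel Ag Atom V) (a : Ag) (e₁ e₂ : Set V × Set V) : Prop :=
  ∃ u : V, M.χ u = a ∧ u ∈ ebar e₁ ∧ u ∈ e₂.1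

/-- The epistemic accessibility relation `K^G_a` between hyperedges:
some `a`-colored vertex lies in `ē₁ ∩ ē₂`. -/
def Kacc (M : HModel Ag Atom V) (a : Ag) (e₁ e₂ : Set V × Set V) : Prop :=
  ∃ u : V, M.χ u = a ∧ u ∈ ebar e₁ ∧ u ∈ ebar e₂

/-- `ℓ(e) = ⋃_{u ∈ ē} ℓ(u)`. -/
def elabel (M : HModel Ag Atom V) (e : Set V × Set V) : Set Atom :=
  ⋃ u ∈ ebar e, M.ℓ u

/-- Hypergraph satisfaction `⊨ₕ`. -/
def hsat (M : HModel Ag Atom V) : Set V × Set V → Form Ag Atom → Prop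
  | e, .atom p  => p ∈ elabel M e
  | e, .neg φ   => ¬ hsat M e φ
  | e, .and φ ψ => hsat M e φ ∧ hsat M e ψ
  | e, .B a φ   => ∀ e' ∈ M.E, Bacc M a e e' → hsat M e' φ
  | e, .K a φ   => ∀ e' ∈ M.E, Kacc M a e e' → hsat M e' φ

end HSemantics

end DoxHG

namespace DoxHG

section Basics

variable {Ag Atom : Type}

@[simp] lemma noK_atom (p : Atom) : (Form.atom p : Form Ag Atom).noK := trivial
@[simp] lemma noK_neg (φ : Form Ag Atom) : (Form.neg φ).noK ↔ φ.noK := Iff.rfl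
@[simp] lemma noK_and (φ ψ : Form Ag Atom) :
    (Form.and φ ψ).noK ↔ φ.noK ∧ ψ.noK := Iff.rfl
@[simp] lemma noK_Bop (a : Ag) (φ : Form Ag Atom) : (Form.B a φ).noK ↔ φ.noK := Iff.rfl
@[simp] lemma noK_or (φ ψ : Form Ag Atom) :
    (Form.or φ ψ).noK ↔ φ.noK ∧ ψ.noK := Iff.rfl
@[simp] lemma noK_imp (φ ψ : Form Ag Atom) :
    (Form.imp φ ψ).noK ↔ φ.noK ∧ ψ.noK := Iff.rfl

lemma BProv_noK {owner : Atom → Ag} {b : Bool} {φ : Form Ag Atom}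
    (h : BProv owner b φ) : φ.noK := by
  induction h with
  | taut h _ => exact h
  | axKB a hφ hψ => simp [hφ, hψ]
  | axDB a _ hφ => simp [hφ]
  | ax4B a hφ => simp [hφ]
  | ax5B a hφ => simp [hφ]
  | axLoc a p h => simp
  | mp _ _ ih1 ih2 => exact ((noK_imp _ _).mp ih1).2
  | nec a _ ih => exact ih

/-! Tautology instances. -/

lemma taut_id (A : Form Ag Atom) : Tautology (A.imp A) := by
  intro v h1 h2
  simp only [Form.imp, Form.or, h1, h2]
  cases v A <;> rfl

lemma taut_k (A B : Form Ag Atom) : Tautology (A.imp (B.imp A)) := by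
  intro v h1 h2
  simp only [Form.imp, Form.or, h1, h2]
  cases v A <;> cases v B <;> rfl

lemma taut_s (C A B : Form Ag Atom) :
    Tautology ((C.imp (A.imp B)).imp ((C.imp A).imp (C.imp B))) := by
  intro v h1 h2
  simp only [Form.imp, Form.or, h1, h2]
  cases v A <;> cases v B <;> cases v C <;> rfl

lemma taut_pair_fls (A B : Form Ag Atom) :
    Tautology (A.imp ((Form.neg A).imp (B.and (Form.neg B)))) := by
  intro v h1 h2
  simp only [Form.imp, Form.or, h1, h2]
  cases v A <;> cases v B <;> rfl

lemma taut_dne_fls (A B : Form Ag Atom) :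
    Tautology (((Form.neg A).imp (B.and (Form.neg B))).imp A) := by
  intro v h1 h2
  simp only [Form.imp, Form.or, h1, h2]
  cases v A <;> cases v B <;> rfl

lemma taut_neg_intro (A B : Form Ag Atom) :
    Tautology ((A.imp (B.and (Form.neg B))).imp (Form.neg A)) := by
  intro v h1 h2
  simp only [Form.imp, Form.or, h1, h2]
  cases v A <;> cases v B <;> rfl

lemma taut_and_left (A B : Form Ag Atom) : Tautology ((A.and B).imp A) := by
  intro v h1 h2
  simp only [Form.imp, Form.or, h1, h2]
  cases v A <;> cases v B <;> rfl

lemma taut_and_right (A B : Form Ag Atom) : Tautology ((A.and B).imp B) := by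
  intro v h1 h2
  simp only [Form.imp, Form.or, h1, h2]
  cases v A <;> cases v B <;> rfl

lemma taut_and_intro (A B : Form Ag Atom) : Tautology (A.imp (B.imp (A.and B))) := by
  intro v h1 h2
  simp only [Form.imp, Form.or, h1, h2]
  cases v A <;> cases v B <;> rfl

lemma taut_comp (A B C D : Form Ag Atom) :
    Tautology ((A.imp (B.imp C)).imp ((C.imp D).imp (A.imp (B.imp D)))) := by
  intro v h1 h2
  simp only [Form.imp, Form.or, h1, h2]
  cases v A <;> cases v B <;> cases v C <;> cases v D <;> rfl

lemma taut_exch (C T E X : Form Ag Atom) :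
    Tautology ((C.imp (T.imp X)).imp ((E.imp C).imp (T.imp (E.imp X)))) := by
  intro v h1 h2
  simp only [Form.imp, Form.or, h1, h2]
  cases v C <;> cases v T <;> cases v E <;> cases v X <;> rfl

end Basics

/-! ### Derived proof rules for `BProv owner true` -/

section Prv

variable {Ag Atom : Type} {owner : Atom → Ag}

/-- Abbreviation for provability in LocKD45. -/
def Prv (owner : Atom → Ag) (φ : Form Ag Atom) : Prop := BProv owner true φ

lemma Prv.taut {φ : Form Ag Atom} (h : φ.noK) (ht : Tautology φ) : Prv owner φ :=
  BProv.taut h ht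

lemma Prv.mp {φ ψ : Form Ag Atom} (h1 : Prv owner (φ.imp ψ)) (h2 : Prv owner φ) :
    Prv owner ψ := BProv.mp h1 h2

/-- Chained implication `χ₁ → (χ₂ → (... → ψ))`. -/
def chainImp : List (Form Ag Atom) → Form Ag Atom → Form Ag Atom
  | [], ψ => ψ
  | χ :: L, ψ => χ.imp (chainImp L ψ)

lemma noK_chainImp {L : List (Form Ag Atom)} {ψ : Form Ag Atom}
    (hL : ∀ χ ∈ L, χ.noK) (hψ : ψ.noK) : (chainImp L ψ).noK := by
  induction L with
  | nil => exact hψ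
  | cons χ L ih =>
      exact (noK_imp _ _).mpr ⟨hL χ (by simp), ih fun χ h => hL χ (by simp [h])⟩

/-- Distribution of `B a` over a chained implication. -/
lemma prv_boxChain (a : Ag) {L : List (Form Ag Atom)} {ψ : Form Ag Atom}
    (hL : ∀ χ ∈ L, χ.noK) (hψ : ψ.noK) :
    Prv owner ((Form.B a (chainImp L ψ)).imp
      (chainImp (L.map (Form.B a)) (Form.B a ψ))) := by
  induction L with
  | nil =>
      exact Prv.taut (by simp [chainImp, hψ]) (taut_id _)
  | cons χ L ih =>
      have hχ : χ.noK := hL χ (by simp)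
      have hL' : ∀ χ ∈ L, Form.noK χ := fun χ h => hL χ (by simp [h])
      have hch : (chainImp L ψ).noK := noK_chainImp hL' hψ
      have hK : Prv owner ((Form.B a (χ.imp (chainImp L ψ))).imp
          ((Form.B a χ).imp (Form.B a (chainImp L ψ)))) :=
        BProv.axKB a hχ hch
      have hmap : (chainImp (L.map (Form.B a)) (Form.B a ψ)).noK := by
        refine noK_chainImp ?_ (by simp [hψ])
        intro χ' h
        rcases List.mem_map.mp h with ⟨χ'', h1, rfl⟩
        simp [hL' χ'' h1]
      have hcomp := Prv.taut (owner := owner)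
        (φ := ((Form.B a (χ.imp (chainImp L ψ))).imp
            ((Form.B a χ).imp (Form.B a (chainImp L ψ)))).imp
          (((Form.B a (chainImp L ψ)).imp (chainImp (L.map (Form.B a)) (Form.B a ψ))).imp
            ((Form.B a (χ.imp (chainImp L ψ))).imp
              ((Form.B a χ).imp (chainImp (L.map (Form.B a)) (Form.B a ψ))))))
        (by simp [hχ, hch, hψ, hmap]) (taut_comp _ _ _ _)
      exact (hcomp.mp hK).mp (ih hL')

/-- Exchange: `chainImp L (θ → ψ) → (θ → chainImp L ψ)`. -/
lemma prv_exchChain {L : List (Form Ag Atom)} {θ ψ : Form Ag Atom}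
    (hL : ∀ χ ∈ L, χ.noK) (hθ : θ.noK) (hψ : ψ.noK) :
    Prv owner ((chainImp L (θ.imp ψ)).imp (θ.imp (chainImp L ψ))) := by
  induction L with
  | nil => exact Prv.taut (by simp [chainImp, hθ, hψ]) (taut_id _)
  | cons χ L ih =>
      have hχ : χ.noK := hL χ (by simp)
      have hL' : ∀ χ ∈ L, Form.noK χ := fun χ h => hL χ (by simp [h])
      have h1 : (chainImp L (θ.imp ψ)).noK := noK_chainImp hL' (by simp [hθ, hψ])
      have h2 : (chainImp L ψ).noK := noK_chainImp hL' hψ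
      have hex := Prv.taut (owner := owner)
        (φ := ((chainImp L (θ.imp ψ)).imp (θ.imp (chainImp L ψ))).imp
          ((χ.imp (chainImp L (θ.imp ψ))).imp (θ.imp (χ.imp (chainImp L ψ)))))
        (by simp [hχ, hθ, h1, h2]) (taut_exch _ _ _ _)
      exact hex.mp (ih hL')

end Prv

end DoxHG

namespace DoxHG

section DProvSec

variable {Ag Atom : Type}

/-- Derivability from a set of hypotheses. -/
inductive DProv (owner : Atom → Ag) (Γ : Set (Form Ag Atom)) : Form Ag Atom → Prop
  | mem {ψ} : ψ ∈ Γ → DProv owner Γ ψ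
  | thm {ψ} : Prv owner ψ → DProv owner Γ ψ
  | mp {φ ψ} : DProv owner Γ (φ.imp ψ) → DProv owner Γ φ → DProv owner Γ ψ

variable {owner : Atom → Ag}

lemma DProv.mono {Γ Δ : Set (Form Ag Atom)} {ψ : Form Ag Atom} (h : Γ ⊆ Δ)
    (hd : DProv owner Γ ψ) : DProv owner Δ ψ := by
  induction hd with
  | mem h' => exact DProv.mem (h h')
  | thm h' => exact DProv.thm h'
  | mp _ _ ih1 ih2 => exact DProv.mp ih1 ih2

lemma DProv_noK {Γ : Set (Form Ag Atom)} {ψ : Form Ag Atom}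
    (hΓ : ∀ χ ∈ Γ, χ.noK) (hd : DProv owner Γ ψ) : ψ.noK := by
  induction hd with
  | mem h' => exact hΓ _ h'
  | thm h' => exact BProv_noK h'
  | mp _ _ ih1 ih2 => exact ((noK_imp _ _).mp ih1).2

lemma DProv_finite {Γ : Set (Form Ag Atom)} {ψ : Form Ag Atom}
    (hd : DProv owner Γ ψ) : ∃ L : List (Form Ag Atom),
      (∀ χ ∈ L, χ ∈ Γ) ∧ DProv owner {χ | χ ∈ L} ψ := by
  induction hd with
  | @mem ψ h' => exact ⟨[ψ], by simpa using h', DProv.mem (by simp)⟩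
  | thm h' => exact ⟨[], by simp, DProv.thm h'⟩
  | mp _ _ ih1 ih2 =>
      obtain ⟨L1, hL1, hd1⟩ := ih1
      obtain ⟨L2, hL2, hd2⟩ := ih2
      refine ⟨L1 ++ L2, ?_, DProv.mp
        (hd1.mono (by intro χ h; simp only [Set.mem_setOf_eq] at *; simp [h]))
        (hd2.mono (by intro χ h; simp only [Set.mem_setOf_eq] at *; simp [h]))⟩
      intro χ h; rcases List.mem_append.mp h with h | h
      exacts [hL1 χ h, hL2 χ h]

lemma DProv_empty {ψ : Form Ag Atom} (hd : DProv owner (∅ : Set (Form Ag Atom)) ψ) :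
    Prv owner ψ := by
  induction hd with
  | mem h' => exact absurd h' (Set.notMem_empty _)
  | thm h' => exact h'
  | mp _ _ ih1 ih2 => exact ih1.mp ih2

/-- The deduction theorem. -/
lemma deduction {Γ : Set (Form Ag Atom)} {χ ψ : Form Ag Atom}
    (hΓ : ∀ θ ∈ Γ, θ.noK) (hχ : χ.noK)
    (hd : DProv owner (insert χ Γ) ψ) : DProv owner Γ (χ.imp ψ) := by
  have hins : ∀ θ ∈ insert χ Γ, Form.noK θ := by
    intro θ h; rcases h with h | h
    · exact h ▸ hχ
    · exact hΓ θ h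
  induction hd with
  | @mem ψ h' =>
      rcases h' with h' | h'
      · subst h'
        exact DProv.thm (Prv.taut (by simp [hχ]) (taut_id _))
      · exact DProv.mp
          (DProv.thm (Prv.taut (by simp [hχ, hΓ _ h']) (taut_k _ _))) (DProv.mem h')
  | @thm ψ h' =>
      exact DProv.mp
        (DProv.thm (Prv.taut (by simp [hχ, BProv_noK h']) (taut_k _ _))) (DProv.thm h')
  | @mp φ ψ hd1 hd2 ih1 ih2 =>
      have hφψ : (φ.imp ψ).noK := DProv_noK hins hd1
      obtain ⟨hφ, hψ⟩ := (noK_imp _ _).mp hφψ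
      have hs : Prv owner ((χ.imp (φ.imp ψ)).imp ((χ.imp φ).imp (χ.imp ψ))) :=
        Prv.taut (by simp [hχ, hφ, hψ]) (taut_s _ _ _)
      exact DProv.mp (DProv.mp (DProv.thm hs) ih1) ih2

lemma dprov_chain_mp {Γ : Set (Form Ag Atom)} {L : List (Form Ag Atom)}
    {ψ : Form Ag Atom} (hd : DProv owner Γ (chainImp L ψ))
    (hL : ∀ χ ∈ L, DProv owner Γ χ) : DProv owner Γ ψ := by
  induction L generalizing Γ with
  | nil => exact hd
  | cons χ L ih =>
      exact ih (DProv.mp hd (hL χ (by simp))) (fun χ' h => hL χ' (by simp [h]))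

/-- From a derivation from a finite list of noK hypotheses, get a provable chain. -/
lemma dprov_to_chain {L : List (Form Ag Atom)} {ψ : Form Ag Atom}
    (hL : ∀ χ ∈ L, χ.noK) (hψ : ψ.noK)
    (hd : DProv owner {χ | χ ∈ L} ψ) : Prv owner (chainImp L ψ) := by
  induction L generalizing ψ with
  | nil =>
      refine DProv_empty (hd.mono ?_)
      intro χ h; simp at h
  | cons θ L ih =>
      have hθ : θ.noK := hL θ (by simp)
      have hL' : ∀ χ ∈ L, Form.noK χ := fun χ h => hL χ (by simp [h])
      have h1 : DProv owner (insert θ {χ | χ ∈ L}) ψ := by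
        refine hd.mono ?_
        intro χ h; simp only [Set.mem_setOf_eq, List.mem_cons] at h
        rcases h with h | h
        · exact Or.inl h
        · exact Or.inr h
      have h2 : DProv owner {χ | χ ∈ L} (θ.imp ψ) := deduction hL' hθ h1
      have h3 : Prv owner (chainImp L (θ.imp ψ)) := ih hL' (by simp [hθ, hψ]) h2
      exact (prv_exchChain hL' hθ hψ).mp h3

end DProvSec

/-! ### Consistency, maximal consistent sets, Lindenbaum -/

section MCSsec

variable {Ag Atom : Type} (owner : Atom → Ag) (p0 : Atom)

/-- A fixed contradiction. -/
def fls : Form Ag Atom := (Form.atom p0).and (Form.neg (Form.atom p0))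

@[simp] lemma noK_fls : (fls p0 : Form Ag Atom).noK := by simp [fls]

/-- Consistency. -/
def Con (Γ : Set (Form Ag Atom)) : Prop := ¬ DProv owner Γ (fls p0)

/-- Maximal consistent sets of `K`-free formulas. -/
structure MCS (Γ : Set (Form Ag Atom)) : Prop where
  noK : ∀ χ ∈ Γ, χ.noK
  con : Con owner p0 Γ
  max : ∀ ψ : Form Ag Atom, ψ.noK → ψ ∉ Γ → ¬ Con owner p0 (insert ψ Γ)

variable {owner p0}

lemma lindenbaum {Γ : Set (Form Ag Atom)} (hnoK : ∀ χ ∈ Γ, χ.noK)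
    (hcon : Con owner p0 Γ) : ∃ Δ, Γ ⊆ Δ ∧ MCS owner p0 Δ := by
  classical
  set S : Set (Set (Form Ag Atom)) :=
    {Δ | (∀ χ ∈ Δ, χ.noK) ∧ Con owner p0 Δ} with hS
  have hzorn := zorn_subset_nonempty S ?_ Γ ⟨hnoK, hcon⟩
  · obtain ⟨Δ, hsub, hmax⟩ := hzorn
    refine ⟨Δ, hsub, hmax.prop.1, hmax.prop.2, ?_⟩
    intro ψ hψ hnot hconins
    have : insert ψ Δ ∈ S := by
      refine ⟨?_, hconins⟩
      intro χ h; rcases h with h | h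
      · exact h ▸ hψ
      · exact hmax.prop.1 χ h
    have := hmax.2 this (Set.subset_insert _ _)
    exact hnot (this (Set.mem_insert _ _))
  · intro c hcS hchain hcne
    refine ⟨⋃₀ c, ⟨?_, ?_⟩, fun s hs => Set.subset_sUnion_of_mem hs⟩
    · intro χ h
      obtain ⟨t, ht, hχ⟩ := h
      exact (hcS ht).1 χ hχ
    · intro hd
      obtain ⟨L, hL, hdL⟩ := DProv_finite hd
      -- find a single member of the chain containing all of L
      have hdir : DirectedOn (· ⊆ ·) c := hchain.directedOn
      obtain ⟨t0, ht0⟩ := hcne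
      have : ∃ t ∈ c, ∀ χ ∈ L, χ ∈ t := by
        clear hdL
        induction L with
        | nil => exact ⟨t0, ht0, by simp⟩
        | cons θ L ih =>
            obtain ⟨t, htc, htL⟩ := ih (fun χ h => hL χ (by simp [h]))
            obtain ⟨u, huc, hθu⟩ := hL θ (by simp)
            obtain ⟨w, hwc, htw, huw⟩ := hdir t htc u huc
            refine ⟨w, hwc, ?_⟩
            intro χ h; rcases List.mem_cons.mp h with h | h
            · exact h ▸ huw hθu
            · exact htw (htL χ h)
      obtain ⟨t, htc, htL⟩ := this
      exact (hcS htc).2 (hdL.mono (fun χ h => htL χ h))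

variable {Γ : Set (Form Ag Atom)} (hΓ : MCS owner p0 Γ)

include hΓ

lemma MCS.mem_of_dprov {ψ : Form Ag Atom} (hψ : ψ.noK) (hd : DProv owner Γ ψ) :
    ψ ∈ Γ := by
  by_contra hnot
  have h1 : ¬ Con owner p0 (insert ψ Γ) := hΓ.max ψ hψ hnot
  have h2 : DProv owner (insert ψ Γ) (fls p0) := not_not.mp h1
  have h3 : DProv owner Γ (ψ.imp (fls p0)) := deduction hΓ.noK hψ h2
  exact hΓ.con (DProv.mp h3 hd)

lemma MCS.thm_mem {ψ : Form Ag Atom} (h : Prv owner ψ) : ψ ∈ Γ :=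
  hΓ.mem_of_dprov (BProv_noK h) (DProv.thm h)

lemma MCS.mp_mem {φ ψ : Form Ag Atom} (h1 : φ.imp ψ ∈ Γ) (h2 : φ ∈ Γ) : ψ ∈ Γ :=
  hΓ.mem_of_dprov ((noK_imp _ _).mp (hΓ.noK _ h1)).2 (DProv.mp (DProv.mem h1) (DProv.mem h2))

lemma MCS.not_both {ψ : Form Ag Atom} (h1 : ψ ∈ Γ) (h2 : Form.neg ψ ∈ Γ) : False := by
  have hψ : ψ.noK := hΓ.noK _ h1
  have ht : Prv owner (ψ.imp ((Form.neg ψ).imp (fls p0))) :=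
    Prv.taut (by simp [hψ]) (taut_pair_fls _ _)
  exact hΓ.con (DProv.mp (DProv.mp (DProv.thm ht) (DProv.mem h1)) (DProv.mem h2))

lemma MCS.neg_mem_of_notMem {ψ : Form Ag Atom} (hψ : ψ.noK) (h : ψ ∉ Γ) :
    Form.neg ψ ∈ Γ := by
  have h1 : ¬ Con owner p0 (insert ψ Γ) := hΓ.max ψ hψ h
  have h2 : DProv owner Γ (ψ.imp (fls p0)) := deduction hΓ.noK hψ (not_not.mp h1)
  have ht : Prv owner ((ψ.imp (fls p0)).imp (Form.neg ψ)) :=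
    Prv.taut (by simp [hψ]) (taut_neg_intro _ _)
  exact hΓ.mem_of_dprov (by simp [hψ]) (DProv.mp (DProv.thm ht) h2)

lemma MCS.neg_mem_iff {ψ : Form Ag Atom} (hψ : ψ.noK) :
    Form.neg ψ ∈ Γ ↔ ψ ∉ Γ := by
  constructor
  · intro h1 h2; exact hΓ.not_both h2 h1
  · exact hΓ.neg_mem_of_notMem hψ

lemma MCS.and_mem_iff {φ ψ : Form Ag Atom} (hφ : φ.noK) (hψ : ψ.noK) :
    Form.and φ ψ ∈ Γ ↔ φ ∈ Γ ∧ ψ ∈ Γ := by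
  constructor
  · intro h
    constructor
    · exact hΓ.mp_mem (hΓ.thm_mem (Prv.taut (by simp [hφ, hψ]) (taut_and_left φ ψ))) h
    · exact hΓ.mp_mem (hΓ.thm_mem (Prv.taut (by simp [hφ, hψ]) (taut_and_right φ ψ))) h
  · rintro ⟨h1, h2⟩
    exact hΓ.mp_mem
      (hΓ.mp_mem (hΓ.thm_mem (Prv.taut (by simp [hφ, hψ]) (taut_and_intro φ ψ))) h1) h2

end MCSsec

end DoxHG

namespace DoxHG

section Canonical

variable {Ag Atom : Type} (owner : Atom → Ag) (p0 : Atom)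

/-- The canonical worlds: maximal consistent sets. -/
def CW := {Γ : Set (Form Ag Atom) // MCS owner p0 Γ}

/-- The canonical Kripke model. -/
def canM : KModel Ag Atom (CW owner p0) where
  B a Γ Δ := ∀ ψ : Form Ag Atom, ψ.noK → Form.B a ψ ∈ Γ.1 → ψ ∈ Δ.1
  V Γ := {p | Form.atom p ∈ Γ.1}

variable {owner p0}

/-- The existence lemma. -/
lemma can_exists {Γ : CW owner p0} {a : Ag} {ψ : Form Ag Atom} (hψ : ψ.noK)
    (h : Form.B a ψ ∉ Γ.1) :
    ∃ Δ : CW owner p0, (canM owner p0).B a Γ Δ ∧ ψ ∉ Δ.1 := by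
  classical
  set Δ0 : Set (Form Ag Atom) := {χ | χ.noK ∧ Form.B a χ ∈ Γ.1} with hΔ0
  have hΔ0noK : ∀ χ ∈ Δ0, χ.noK := fun χ h => h.1
  have hnoK1 : ∀ χ ∈ insert (Form.neg ψ) Δ0, χ.noK := by
    intro χ h; rcases h with h | h
    · exact h ▸ (by simpa using hψ)
    · exact h.1
  have hcon : Con owner p0 (insert (Form.neg ψ) Δ0) := by
    intro hd
    have h1 : DProv owner Δ0 ((Form.neg ψ).imp (fls p0)) :=
      deduction hΔ0noK (by simpa using hψ) hd
    have ht : Prv owner (((Form.neg ψ).imp (fls p0)).imp ψ) :=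
      Prv.taut (by simp [hψ, fls]) (taut_dne_fls ψ (Form.atom p0))
    have h2 : DProv owner Δ0 ψ := DProv.mp (DProv.thm ht) h1
    obtain ⟨L, hL, hdL⟩ := DProv_finite h2
    have hLnoK : ∀ χ ∈ L, χ.noK := fun χ h => (hL χ h).1
    have h3 : Prv owner (chainImp L ψ) := dprov_to_chain hLnoK hψ hdL
    have h4 : Prv owner (Form.B a (chainImp L ψ)) := BProv.nec a h3
    have h5 : Prv owner (chainImp (L.map (Form.B a)) (Form.B a ψ)) :=
      (prv_boxChain a hLnoK hψ).mp h4
    have h6 : DProv owner Γ.1 (Form.B a ψ) := by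
      refine dprov_chain_mp (DProv.thm h5) ?_
      intro χ hχ
      rcases List.mem_map.mp hχ with ⟨χ', hχ', rfl⟩
      exact DProv.mem (hL χ' hχ').2
    exact h (Γ.2.mem_of_dprov (by simpa using hψ) h6)
  obtain ⟨Δ, hsub, hΔ⟩ := lindenbaum hnoK1 hcon
  refine ⟨⟨Δ, hΔ⟩, ?_, ?_⟩
  · intro χ hχ hmem
    exact hsub (Set.mem_insert_of_mem _ ⟨hχ, hmem⟩)
  · intro hmem
    exact hΔ.not_both hmem (hsub (Set.mem_insert _ _))

lemma canM_serial : (canM owner p0).Serial := by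
  intro a Γ
  have h1 : Form.neg (Form.B a (fls p0)) ∈ Γ.1 :=
    Γ.2.thm_mem (BProv.axDB a rfl (by simp))
  have h2 : Form.B a (fls p0) ∉ Γ.1 := fun h => Γ.2.not_both h h1
  obtain ⟨Δ, hB, _⟩ := can_exists (by simp) h2
  exact ⟨Δ, hB⟩

lemma canM_transit : (canM owner p0).Transit := by
  intro a u v w huv hvw ψ hψ hmem
  have h4 : Form.B a (Form.B a ψ) ∈ u.1 :=
    u.2.mp_mem (u.2.thm_mem (BProv.ax4B a hψ)) hmem
  exact hvw ψ hψ (huv _ (by simpa using hψ) h4)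

lemma canM_eucl : (canM owner p0).Eucl := by
  intro a u v w huv huw ψ hψ hmem
  have hBu : Form.B a ψ ∈ u.1 := by
    by_contra hnot
    have hneg : Form.neg (Form.B a ψ) ∈ u.1 :=
      u.2.neg_mem_of_notMem (by simpa using hψ) hnot
    have h5 : Form.B a (Form.neg (Form.B a ψ)) ∈ u.1 :=
      u.2.mp_mem (u.2.thm_mem (BProv.ax5B a hψ)) hneg
    have : Form.neg (Form.B a ψ) ∈ v.1 := huv _ (by simpa using hψ) h5
    exact v.2.not_both hmem this
  exact huw ψ hψ hBu

lemma canM_local : (canM owner p0).Local owner := by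
  have key : ∀ (a : Ag) (u v : CW owner p0), (canM owner p0).B a u v →
      (canM owner p0).V u ∩ {p | owner p = a} = (canM owner p0).V v ∩ {p | owner p = a} := by
    intro a u v huv
    ext p
    simp only [Set.mem_inter_iff, Set.mem_setOf_eq]
    constructor
    · rintro ⟨hp, hop⟩
      refine ⟨?_, hop⟩
      have hloc : Prv owner ((Form.atom p).imp (Form.B a (Form.atom p))) := by
        have h0 := BProv.axLoc (owner := owner) (withD := true) a p hop
        exact Prv.mp (Prv.taut (by simp) (taut_and_left _ _)) h0
      have : Form.B a (Form.atom p) ∈ u.1 := u.2.mp_mem (u.2.thm_mem hloc) hp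
      exact huv _ (by simp) this
    · rintro ⟨hp, hop⟩
      refine ⟨?_, hop⟩
      by_contra hnot
      have hneg : Form.neg (Form.atom p) ∈ u.1 := u.2.neg_mem_of_notMem (by simp) hnot
      have hloc : Prv owner ((Form.neg (Form.atom p)).imp (Form.B a (Form.neg (Form.atom p)))) := by
        have h0 := BProv.axLoc (owner := owner) (withD := true) a p hop
        exact Prv.mp (Prv.taut (by simp) (taut_and_right _ _)) h0
      have : Form.B a (Form.neg (Form.atom p)) ∈ u.1 := u.2.mp_mem (u.2.thm_mem hloc) hneg
      have : Form.neg (Form.atom p) ∈ v.1 := huv _ (by simp) this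
      exact v.2.not_both hp this
  intro a u v h
  rcases h with h | h
  · exact key a u v h
  · exact (key a v u h).symm

/-- The canonical truth lemma. -/
lemma can_truth {ψ : Form Ag Atom} (hψ : ψ.noK) (Γ : CW owner p0) :
    ksat (canM owner p0) Γ ψ ↔ ψ ∈ Γ.1 := by
  induction ψ generalizing Γ with
  | atom p => exact Iff.rfl
  | neg φ ih =>
      have hφ : φ.noK := by simpa using hψ
      show ¬ ksat (canM owner p0) Γ φ ↔ _
      rw [ih hφ]
      exact (Γ.2.neg_mem_iff hφ).symm
  | and φ χ ih1 ih2 =>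
      obtain ⟨hφ, hχ⟩ := (noK_and φ χ).mp hψ
      show (ksat _ Γ φ ∧ ksat _ Γ χ) ↔ _
      rw [ih1 hφ, ih2 hχ, Γ.2.and_mem_iff hφ hχ]
  | B a φ ih =>
      have hφ : φ.noK := by simpa using hψ
      show (∀ Δ, (canM owner p0).B a Γ Δ → ksat _ Δ φ) ↔ _
      constructor
      · intro h
        by_contra hnot
        obtain ⟨Δ, hB, hφΔ⟩ := can_exists hφ hnot
        exact hφΔ ((ih hφ Δ).mp (h Δ hB))
      · intro h Δ hB
        exact (ih hφ Δ).mpr (hB φ hφ h)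
  | K a φ ih => exact absurd hψ (by simp [Form.noK])

end Canonical

end DoxHG

namespace DoxHG

section Construction

variable {Ag Atom W : Type} [Fintype Ag] (owner : Atom → Ag) (N : KModel Ag Atom W)

/-- The belief cluster of `w` for agent `a`. -/
def cl (a : Ag) (w : W) : Set W := {v | N.B a w v}

def ebarOf (w : W) : Set (Ag × Set W) := Set.range fun a => (a, cl N a w)

def tailOf (w : W) : Set (Ag × Set W) :=
  {x | x ∈ ebarOf N w ∧ ∃ v : W, (∀ b, cl N b v = cl N b w) ∧ v ∈ x.2}

def edgeOf (w : W) : Set (Ag × Set W) × Set (Ag × Set W) :=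
  (tailOf N w, ebarOf N w \ tailOf N w)

/-- The hypergraph model induced by a Kripke model. -/
def hOf : HModel Ag Atom (Ag × Set W) where
  Vset := {x | ∃ w : W, x.2 = cl N x.1 w}
  E := {e | ∃ w : W, e = edgeOf N w}
  χ := Prod.fst
  ℓ := fun x => {p | owner p = x.1 ∧ ∀ v ∈ x.2, p ∈ N.V v}

variable {N}

lemma mem_ebarOf {x : Ag × Set W} {w : W} :
    x ∈ ebarOf N w ↔ x.2 = cl N x.1 w := by
  constructor
  · rintro ⟨a, rfl⟩; rfl
  · intro h; exact ⟨x.1, (Prod.ext rfl h.symm : (x.1, cl N x.1 w) = x)⟩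

lemma tailOf_subset {w : W} : tailOf N w ⊆ ebarOf N w := fun _ hx => hx.1

lemma ebar_edgeOf (w : W) : ebar (edgeOf N w) = ebarOf N w :=
  Set.union_diff_cancel tailOf_subset

lemma ebarOf_eq {v w : W} (h : ∀ b, cl N b v = cl N b w) :
    ebarOf N v = ebarOf N w := by
  unfold ebarOf; simp only [h]

lemma edgeOf_eq {v w : W} (h : ∀ b, cl N b v = cl N b w) :
    edgeOf N v = edgeOf N w := by
  unfold edgeOf tailOf
  rw [ebarOf_eq h]
  simp only [h]

variable (hS : N.Serial) (hT : N.Transit) (hE : N.Eucl)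

include hT hE in
lemma cl_of_mem_cl {a : Ag} {v w : W} (h : v ∈ cl N a w) : cl N a v = cl N a w := by
  ext u
  constructor
  · intro hu; exact hT a w v u h hu
  · intro hu; exact hE a w v u h hu

include hE in
lemma self_mem_cl {a : Ag} {v w : W} (h : v ∈ cl N a w) : v ∈ cl N a v :=
  hE a w v v h h

include hS in
lemma cl_nonempty (a : Ag) (w : W) : (cl N a w).Nonempty := hS a w

lemma Bacc_edgeOf {a : Ag} {w v : W} :
    Bacc (hOf owner N) a (edgeOf N w) (edgeOf N v) ↔
      cl N a v = cl N a w ∧ ∃ x : W, (∀ b, cl N b x = cl N b v) ∧ x ∈ cl N a w := by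
  constructor
  · rintro ⟨u, hu1, hu2, hu3⟩
    rw [ebar_edgeOf] at hu2
    have hu2' : u.2 = cl N u.1 w := mem_ebarOf.mp hu2
    obtain ⟨hmem, x, hx1, hx2⟩ := hu3
    have hmem' : u.2 = cl N u.1 v := mem_ebarOf.mp hmem
    subst hu1
    rw [hu2'] at hmem' hx2
    exact ⟨hmem'.symm, x, hx1, hx2⟩
  · rintro ⟨h1, x, hx1, hx2⟩
    refine ⟨(a, cl N a w), rfl, ?_, ?_, ?_⟩
    · rw [ebar_edgeOf]; exact mem_ebarOf.mpr rfl
    · exact mem_ebarOf.mpr h1.symm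
    · exact ⟨x, hx1, hx2⟩

include hS hT hE in
/-- The hypergraph truth lemma. -/
lemma hOf_truth (hLoc : N.Local owner) {ψ : Form Ag Atom} (hψ : ψ.noK) (w : W) :
    hsat (hOf owner N) (edgeOf N w) ψ ↔ ksat N w ψ := by
  induction ψ generalizing w with
  | atom p =>
      show p ∈ elabel (hOf owner N) (edgeOf N w) ↔ p ∈ N.V w
      simp only [elabel, Set.mem_iUnion, ebar_edgeOf]
      constructor
      · rintro ⟨x, hx, hp1, hp2⟩
        have hx' : x.2 = cl N x.1 w := mem_ebarOf.mp hx
        obtain ⟨v0, hv0⟩ := cl_nonempty hS x.1 w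
        have hploc := hLoc x.1 w v0 (Or.inl hv0)
        have : p ∈ N.V v0 ∩ {q | owner q = x.1} := ⟨hp2 v0 (hx' ▸ hv0), hp1⟩
        rw [← hploc] at this
        exact this.1
      · intro hp
        refine ⟨(owner p, cl N (owner p) w), mem_ebarOf.mpr rfl, rfl, ?_⟩
        intro v hv
        have hploc := hLoc (owner p) w v (Or.inl hv)
        have : p ∈ N.V w ∩ {q | owner q = owner p} := ⟨hp, rfl⟩
        rw [hploc] at this
        exact this.1
  | neg φ ih =>
      have hφ : φ.noK := by simpa using hψ
      show ¬ _ ↔ ¬ _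
      rw [ih hφ]
  | and φ χ ih1 ih2 =>
      obtain ⟨hφ, hχ⟩ := (noK_and φ χ).mp hψ
      show _ ∧ _ ↔ _ ∧ _
      rw [ih1 hφ, ih2 hχ]
  | B a φ ih =>
      have hφ : φ.noK := by simpa using hψ
      show (∀ e' ∈ (hOf owner N).E, Bacc _ a _ e' → hsat _ e' φ) ↔
        (∀ u, N.B a w u → ksat N u φ)
      constructor
      · intro h u hu
        have hmem : edgeOf N u ∈ (hOf owner N).E := ⟨u, rfl⟩
        have hacc : Bacc (hOf owner N) a (edgeOf N w) (edgeOf N u) := by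
          refine (Bacc_edgeOf owner).mpr ⟨cl_of_mem_cl hT hE hu, u, fun b => rfl, hu⟩
        exact (ih hφ u).mp (h _ hmem hacc)
      · rintro h e' ⟨v, rfl⟩ hacc
        obtain ⟨h1, x, hx1, hx2⟩ := (Bacc_edgeOf owner).mp hacc
        have : ksat N x φ := h x hx2
        rw [← ih hφ x] at this
        rwa [edgeOf_eq hx1] at this
  | K a φ ih => exact absurd hψ (by simp [Form.noK])

lemma hOf_isModel [Nonempty Ag] (hW : Nonempty W) :
    (hOf owner N).IsModel owner := by
  refine ⟨⟨?_, ?_⟩, ?_, ?_⟩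
  · obtain ⟨w0⟩ := hW
    obtain ⟨a0⟩ := (inferInstance : Nonempty Ag)
    exact ⟨(a0, cl N a0 w0), w0, rfl⟩
  · rintro e ⟨w, rfl⟩
    have hfin : (ebarOf N w).Finite := Set.finite_range _
    refine ⟨?_, ?_, ?_, ?_, Set.disjoint_sdiff_right⟩
    · intro x hx
      exact ⟨w, mem_ebarOf.mp (tailOf_subset hx)⟩
    · intro x hx
      exact ⟨w, mem_ebarOf.mp hx.1⟩
    · exact hfin.subset tailOf_subset
    · exact hfin.subset Set.diff_subset
  · rintro e ⟨w, rfl⟩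
    intro x hx y hy hxy
    rw [ebar_edgeOf] at hx hy
    have hx' := mem_ebarOf.mp hx
    have hy' := mem_ebarOf.mp hy
    have : x.1 = y.1 := hxy
    exact Prod.ext this (by rw [hx', hy', this])
  · intro x _ p hp
    exact hp.1

lemma hOf_simple : (hOf owner N).Simple := by
  rintro e1 ⟨w1, rfl⟩ e2 ⟨w2, rfl⟩ hne hsub
  refine hne (edgeOf_eq ?_)
  intro b
  rw [ebar_edgeOf, ebar_edgeOf] at hsub
  have : (b, cl N b w1) ∈ ebarOf N w2 := hsub (mem_ebarOf.mpr rfl)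
  exact mem_ebarOf.mp this

lemma hOf_uniform : (hOf owner N).Uniform (Fintype.card Ag) := by
  rintro e ⟨w, rfl⟩
  rw [ebar_edgeOf]
  have hinj : Function.Injective (fun a : Ag => (a, cl N a w)) := by
    intro a b h
    exact congrArg Prod.fst h
  rw [ebarOf, ← Set.image_univ, Set.ncard_image_of_injOn hinj.injOn,
    Set.ncard_univ, Nat.card_eq_fintype_card]

include hS hT hE in
lemma hOf_tailComplete : (hOf owner N).TailComplete := by
  rintro x ⟨w, hx⟩
  obtain ⟨v0, hv0⟩ := cl_nonempty hS x.1 w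
  refine ⟨edgeOf N v0, ⟨v0, rfl⟩, ?_, v0, fun b => rfl, ?_⟩
  · exact mem_ebarOf.mpr (by rw [hx, cl_of_mem_cl hT hE hv0])
  · rw [hx]; exact hv0

end Construction

end DoxHG

namespace DoxHG

section Soundness

variable {Ag Atom V : Type} [Fintype Ag] {owner : Atom → Ag} {M : HModel Ag Atom V}

lemma hsat_neg {e : Set V × Set V} {φ : Form Ag Atom} :
    hsat M e (Form.neg φ) ↔ ¬ hsat M e φ := Iff.rfl

lemma hsat_and {e : Set V × Set V} {φ ψ : Form Ag Atom} :
    hsat M e (Form.and φ ψ) ↔ hsat M e φ ∧ hsat M e ψ := Iff.rfl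

lemma hsat_imp {e : Set V × Set V} {φ ψ : Form Ag Atom} :
    hsat M e (φ.imp ψ) ↔ (hsat M e φ → hsat M e ψ) := by
  show ¬(¬¬ hsat M e φ ∧ ¬ hsat M e ψ) ↔ _
  tauto

lemma ebar_subset_Vset (hM : M.IsModel owner) {e : Set V × Set V} (he : e ∈ M.E) :
    ebar e ⊆ M.Vset := by
  obtain ⟨h1, h2, _, _, _⟩ := hM.1.2 e he
  exact Set.union_subset h1 h2

lemma exists_vertex (hM : M.IsModel owner) (hU : M.Uniform (Fintype.card Ag))
    {e : Set V × Set V} (he : e ∈ M.E) (a : Ag) : ∃ u ∈ ebar e, M.χ u = a := by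
  have hinj : Set.InjOn M.χ (ebar e) := hM.2.1 e he
  have h1 : (M.χ '' ebar e).ncard = Fintype.card Ag := by
    rw [Set.ncard_image_of_injOn hinj, hU e he]
  have h2 : M.χ '' ebar e = Set.univ := by
    refine Set.eq_of_subset_of_ncard_le (Set.subset_univ _) ?_ Set.finite_univ
    rw [Set.ncard_univ, Nat.card_eq_fintype_card, h1]
  have : a ∈ M.χ '' ebar e := h2 ▸ Set.mem_univ a
  obtain ⟨u, hu, hχ⟩ := this
  exact ⟨u, hu, hχ⟩

lemma vertex_unique (hM : M.IsModel owner) {e : Set V × Set V} (he : e ∈ M.E)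
    {u u' : V} (hu : u ∈ ebar e) (hu' : u' ∈ ebar e) (h : M.χ u = M.χ u') : u = u' :=
  hM.2.1 e he hu hu' h

lemma Bacc_serial (hM : M.IsModel owner) (hU : M.Uniform (Fintype.card Ag))
    (hTC : M.TailComplete) {e : Set V × Set V} (he : e ∈ M.E) (a : Ag) :
    ∃ e' ∈ M.E, Bacc M a e e' := by
  obtain ⟨u, hu, hχ⟩ := exists_vertex hM hU he a
  obtain ⟨e', he', hu'⟩ := hTC u (ebar_subset_Vset hM he hu)
  exact ⟨e', he', u, hχ, hu, hu'⟩

lemma Bacc_trans (hM : M.IsModel owner) {a : Ag} {e1 e2 e3 : Set V × Set V}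
    (he2 : e2 ∈ M.E) (h12 : Bacc M a e1 e2) (h23 : Bacc M a e2 e3) :
    Bacc M a e1 e3 := by
  obtain ⟨u, hχ, hu1, hu2⟩ := h12
  obtain ⟨u', hχ', hu1', hu2'⟩ := h23
  have : u = u' :=
    vertex_unique hM he2 (Set.mem_union_left _ hu2) hu1' (by rw [hχ, hχ'])
  exact ⟨u, hχ, hu1, this ▸ hu2'⟩

lemma Bacc_eucl (hM : M.IsModel owner) {a : Ag} {e1 e2 e3 : Set V × Set V}
    (he1 : e1 ∈ M.E) (h12 : Bacc M a e1 e2) (h13 : Bacc M a e1 e3) :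
    Bacc M a e2 e3 := by
  obtain ⟨u, hχ, hu1, hu2⟩ := h12
  obtain ⟨u', hχ', hu1', hu2'⟩ := h13
  have : u = u' := vertex_unique hM he1 hu1 hu1' (by rw [hχ, hχ'])
  exact ⟨u, hχ, Set.mem_union_left _ hu2, this ▸ hu2'⟩

lemma elabel_eq_vertex (hM : M.IsModel owner) {e : Set V × Set V} (he : e ∈ M.E)
    {u : V} {a : Ag} (hu : u ∈ ebar e) (hχ : M.χ u = a) {p : Atom}
    (hp : owner p = a) : p ∈ elabel M e ↔ p ∈ M.ℓ u := by
  constructor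
  · intro h
    simp only [elabel, Set.mem_iUnion] at h
    obtain ⟨x, hx, hpx⟩ := h
    have hxV : x ∈ M.Vset := ebar_subset_Vset hM he hx
    have : owner p = M.χ x := hM.2.2 x hxV hpx
    have : x = u := vertex_unique hM he hx hu (by rw [← this, hp, hχ])
    exact this ▸ hpx
  · intro h
    simp only [elabel, Set.mem_iUnion]
    exact ⟨u, hu, h⟩

lemma elabel_agree (hM : M.IsModel owner) {a : Ag} {e1 e2 : Set V × Set V}
    (he1 : e1 ∈ M.E) (he2 : e2 ∈ M.E) (hB : Bacc M a e1 e2) {p : Atom}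
    (hp : owner p = a) : p ∈ elabel M e1 ↔ p ∈ elabel M e2 := by
  obtain ⟨u, hχ, hu1, hu2⟩ := hB
  rw [elabel_eq_vertex hM he1 hu1 hχ hp,
    elabel_eq_vertex hM he2 (Set.mem_union_left _ hu2) hχ hp]

/-- Soundness of LocKD45 over simple, uniform, tail-complete hypergraph models. -/
lemma soundness {φ : Form Ag Atom} (h : BProv owner true φ) :
    ∀ (V : Type) (M : HModel Ag Atom V),
      M.IsModel owner → M.Simple → M.Uniform (Fintype.card Ag) → M.TailComplete →
      ∀ e ∈ M.E, hsat M e φ := by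
  induction h with
  | @taut ψ hK ht =>
      intro V M hM _ _ _ e he
      classical
      set v : Form Ag Atom → Bool := fun χ => if hsat M e χ then true else false with hv
      have h1 : ∀ χ : Form Ag Atom, v (Form.neg χ) = !v χ := by
        intro χ
        by_cases h : hsat M e χ <;> simp [hv, h, hsat_neg]
      have h2 : ∀ χ χ' : Form Ag Atom, v (Form.and χ χ') = (v χ && v χ') := by
        intro χ χ'
        by_cases h : hsat M e χ <;> by_cases h' : hsat M e χ' <;>
          simp [hv, h, h', hsat_and]
      have h3 := ht v h1 h2
      by_contra hns
      simp [hv, hns] at h3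
  | axKB a hφ hψ =>
      intro V M hM _ _ _ e he
      rw [hsat_imp, hsat_imp]
      intro h1 h2 e' he' hacc
      exact (hsat_imp.mp (h1 e' he' hacc)) (h2 e' he' hacc)
  | @axDB a ψ hD hψ =>
      intro V M hM _ hU hTC e he
      rw [hsat_neg]
      intro hB
      obtain ⟨e', he', hacc⟩ := Bacc_serial hM hU hTC he a
      have := hsat_and.mp (hB e' he' hacc)
      exact this.2 this.1
  | ax4B a hφ =>
      intro V M hM _ _ _ e he
      rw [hsat_imp]
      intro h e' he' hacc e'' he'' hacc'
      exact h e'' he'' (Bacc_trans hM he' hacc hacc')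
  | ax5B a hφ =>
      intro V M hM _ _ _ e he
      rw [hsat_imp]
      intro h e' he' hacc
      rw [hsat_neg] at h ⊢
      intro hall
      refine h ?_
      intro e'' he'' hacc'
      exact hall e'' he'' (Bacc_eucl hM he hacc hacc')
  | axLoc a p hp =>
      intro V M hM _ _ _ e he
      rw [hsat_and, hsat_imp, hsat_imp]
      constructor
      · intro h e' he' hacc
        exact (elabel_agree hM he he' hacc hp).mp h
      · intro h e' he' hacc
        rw [hsat_neg] at h ⊢
        intro hmem
        exact h ((elabel_agree hM he he' hacc hp).mpr hmem)
  | mp h1 h2 ih1 ih2 =>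
      intro V M hM hs hU hTC e he
      exact (hsat_imp.mp (ih1 V M hM hs hU hTC e he)) (ih2 V M hM hs hU hTC e he)
  | nec a h ih =>
      intro V M hM hs hU hTC e he e' he' hacc
      exact ih V M hM hs hU hTC e' he'

end Soundness

/-- An atom occurring in a formula. -/
def someAtom {Ag Atom : Type} : Form Ag Atom → Atom
  | .atom p => p
  | .neg φ => someAtom φ
  | .and φ _ => someAtom φ
  | .B _ φ => someAtom φ
  | .K _ φ => someAtom φ

end DoxHG

namespace DoxHG

/-- LocKD45 is sound and complete with respect to the class
`H^{SUT}_n` of all simple, `n`-uniform and tail-complete hypergraph models, for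
formulas of the doxastic fragment `L_B`. -/
theorem statement_14 {Ag Atom : Type} [Fintype Ag] [Nonempty Ag] [Countable Atom]
    (owner : Atom → Ag) (φ : Form Ag Atom) (hφ : φ.noK) :
    BProv owner true φ ↔
      ∀ (V : Type) (M : HModel Ag Atom V),
        M.IsModel owner → M.Simple → M.Uniform (Fintype.card Ag) → M.TailComplete →
        ∀ e ∈ M.E, hsat M e φ := by
  constructor
  · exact fun h => soundness h
  · intro hRHS
    by_contra hnp
    set p0 : Atom := someAtom φ with hp0
    have hng : ∀ χ ∈ ({Form.neg φ} : Set (Form Ag Atom)), χ.noK := by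
      intro χ h
      rw [Set.mem_singleton_iff] at h
      subst h
      simpa using hφ
    have hcon : Con owner p0 {Form.neg φ} := by
      intro hd
      have hd' : DProv owner (insert (Form.neg φ) ∅) (fls p0) :=
        hd.mono (by simp)
      have h1 : DProv owner ∅ ((Form.neg φ).imp (fls p0)) :=
        deduction (by simp) (by simpa using hφ) hd'
      have h2 : Prv owner ((Form.neg φ).imp (fls p0)) := DProv_empty h1
      have ht : Prv owner (((Form.neg φ).imp (fls p0)).imp φ) :=
        Prv.taut (by simp [hφ, fls]) (taut_dne_fls φ (Form.atom p0))
      exact hnp (ht.mp h2)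
    obtain ⟨Γ, hsub, hΓ⟩ := lindenbaum hng hcon
    have hnegφ : Form.neg φ ∈ Γ := hsub rfl
    let Γw : CW owner p0 := ⟨Γ, hΓ⟩
    have hser : (canM owner p0).Serial := canM_serial
    have htra : (canM owner p0).Transit := canM_transit
    have heuc : (canM owner p0).Eucl := canM_eucl
    have hloc : (canM owner p0).Local owner := canM_local
    have hW : Nonempty (CW owner p0) := ⟨Γw⟩
    have hh := hRHS (Ag × Set (CW owner p0)) (hOf owner (canM owner p0))
      (hOf_isModel owner hW) (hOf_simple owner) (hOf_uniform owner)
      (hOf_tailComplete owner hser htra heuc)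
    have he0 : edgeOf (canM owner p0) Γw ∈ (hOf owner (canM owner p0)).E := ⟨Γw, rfl⟩
    have h5 := hh (edgeOf (canM owner p0) Γw) he0
    have h6 : ksat (canM owner p0) Γw φ :=
      (hOf_truth owner hser htra heuc hloc hφ Γw).mp h5
    have h7 : φ ∈ Γ := (can_truth hφ Γw).mp h6
    exact hΓ.not_both h7 hnegφ

end DoxHG
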